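/- Let 𝔻 be a relative entropy and n ∈ ℕ. (1) Upper semi-continuity: for every p ∈ P(n), q ∈ P_{>0}(n) and all sequences {p_k}, {q_k} ⊂ P_{>0}(n) with p_k → p and q_k → q, one has limsup_{k→∞} 𝔻(p_k‖q_k) ≤ 𝔻(p‖q). (2) Continuity: if additionally p ∈ P_{>0}(n), then lim_{k→∞} 𝔻(p_k‖q_k) = 𝔻(p‖q). -/

import Mathlib

open scoped BigOperators ENNReal

/-- A probability vector: nonnegative entries summing to 1. -/
def IsProbVec {n : ℕ} (p : Fin n → ℝ) : Prop :=
  (∀ i, 0 ≤ p i) ∧ ∑ i, p i = 1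

/-- The uniform probability vector on `n` outcomes. -/
noncomputable def uniform (n : ℕ) : Fin n → ℝ := fun _ => (n : ℝ)⁻¹

/-- Kronecker (tensor) product of two vectors. -/
noncomputable def kron {n m : ℕ} (p : Fin n → ℝ) (q : Fin m → ℝ) : Fin (n * m) → ℝ :=
  fun i => p (finProdFinEquiv.symm i).1 * q (finProdFinEquiv.symm i).2

/-- Sum of the `k` largest entries (for vectors with nonnegative entries):
the supremum of sums over subsets of at most `k` indices. -/
noncomputable def maxPartialSum {n : ℕ} (p : Fin n → ℝ) (k : ℕ) : ℝ :=
  sSup { x | ∃ s : Finset (Fin n), s.card ≤ k ∧ ∑ i ∈ s, p i = x }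

/-- `p` majorises `q`: every partial sum of the `k` largest entries of `p`
dominates that of `q` (entries beyond a vector's length count as 0). -/
def Majorizes {n m : ℕ} (p : Fin n → ℝ) (q : Fin m → ℝ) : Prop :=
  ∀ k : ℕ, maxPartialSum q k ≤ maxPartialSum p k

/-- A channel: an `n × m` row-stochastic matrix. -/
def IsStochastic {n m : ℕ} (W : Matrix (Fin n) (Fin m) ℝ) : Prop :=
  (∀ i j, 0 ≤ W i j) ∧ ∀ i, ∑ j, W i j = 1

/-- Relative majorisation of pairs: some channel maps `(p, q)` to `(p', q')`. -/
def RelMaj {n m : ℕ} (p q : Fin n → ℝ) (p' q' : Fin m → ℝ) : Prop :=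
  ∃ W : Matrix (Fin n) (Fin m) ℝ, IsStochastic W ∧
    Matrix.vecMul p W = p' ∧ Matrix.vecMul q W = q'

/-- An entropy: a `[0,∞)`-valued function on probability vectors of all finite dimensions
that is monotone under mixing (majorisation), additive for Kronecker products,
and normalised so that `H(u₂) = log 2` (binary logarithm). -/
structure IsEntropy (H : (n : ℕ) → (Fin n → ℝ) → ℝ) : Prop where
  nonneg : ∀ {n : ℕ} (p : Fin n → ℝ), IsProbVec p → 0 ≤ H n p
  mono : ∀ {n m : ℕ} (p : Fin n → ℝ) (p' : Fin m → ℝ),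
    IsProbVec p → IsProbVec p' → Majorizes p p' → H n p ≤ H m p'
  additive : ∀ {n m : ℕ} (p : Fin n → ℝ) (q : Fin m → ℝ),
    IsProbVec p → IsProbVec q → H (n * m) (kron p q) = H n p + H m q
  normalized : H 2 (uniform 2) = Real.logb 2 2

/-- A monotone divergence: a `[0,∞]`-valued function on pairs of probability vectors of
equal finite dimension satisfying the data-processing inequality and `𝔻(1‖1) = 0`. -/
structure IsMonotoneDivergence (D : (n : ℕ) → (Fin n → ℝ) → (Fin n → ℝ) → ℝ≥0∞) : Prop where
  dpi : ∀ {n m : ℕ} (p q : Fin n → ℝ) (p' q' : Fin m → ℝ),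
    IsProbVec p → IsProbVec q → IsProbVec p' → IsProbVec q' →
    RelMaj p q p' q' → D m p' q' ≤ D n p q
  normalized : D 1 (fun _ => 1) (fun _ => 1) = 0

/-- A relative entropy: data-processing inequality, additivity for Kronecker products,
and the normalisation `𝔻(e₁‖u₂) = log 2` (binary logarithm). -/
structure IsRelativeEntropy (D : (n : ℕ) → (Fin n → ℝ) → (Fin n → ℝ) → ℝ≥0∞) : Prop where
  dpi : ∀ {n m : ℕ} (p q : Fin n → ℝ) (p' q' : Fin m → ℝ),
    IsProbVec p → IsProbVec q → IsProbVec p' → IsProbVec q' →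
    RelMaj p q p' q' → D m p' q' ≤ D n p q
  additive : ∀ {n m : ℕ} (p₁ q₁ : Fin n → ℝ) (p₂ q₂ : Fin m → ℝ),
    IsProbVec p₁ → IsProbVec q₁ → IsProbVec p₂ → IsProbVec q₂ →
    D (n * m) (kron p₁ p₂) (kron q₁ q₂) = D n p₁ q₁ + D m p₂ q₂
  normalized : D 2 ![1, 0] ![1/2, 1/2] = ENNReal.ofReal (Real.logb 2 2)

/-!
Put `f(t) = 𝔻((1,0) ‖ (t, 1-t))`. If `(p', q')` is close enough to `(p, q)` and `q > 0`, then
`p' = (1-ε) p + ε v` and `q' = t q + ε v + (1-t-ε) w` for probability vectors `v, w`, with `t`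
close to `1` and small `ε > 0`. So a channel maps `(p, q) ⊗ ((1-ε, ε, 0), (t, ε, 1-t-ε))` to
`(p', q')`, and since `t (1-ε, ε, 0) ≤ (t, ε, 1-t-ε)`, data processing and additivity give
`𝔻(p'‖q') ≤ 𝔻(p‖q) + f(t)`. If also `p > 0`, the two pairs can swap roles, which gives the
lower bound. It remains to see that `f(t) → 0` as `t → 1`: additivity gives
`2^m f(t) ≤ f(t^(2^m))`, and by data processing this is at most `f(1/2) = 1` once `t^(2^m) ≥ 1/2`.
-/

open Filter Topology Matrix

theorem isProbVec_pair {a : ℝ} (h0 : 0 ≤ a) (h1 : a ≤ 1) : IsProbVec ![a, 1 - a] := by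
  refine ⟨fun i => ?_, by simp [Fin.sum_univ_two]⟩
  fin_cases i <;> simp <;> linarith

theorem isProbVec_pointMass : IsProbVec (![1, 0] : Fin 2 → ℝ) :=
  ⟨fun i => by fin_cases i <;> simp, by simp⟩

theorem IsProbVec.kron {n m : ℕ} {p : Fin n → ℝ} {q : Fin m → ℝ}
    (hp : IsProbVec p) (hq : IsProbVec q) : IsProbVec (kron p q) := by
  refine ⟨fun i => mul_nonneg (hp.1 _) (hq.1 _), ?_⟩
  rw [← finProdFinEquiv.sum_comp, Fintype.sum_prod_type]
  simp [_root_.kron, ← Finset.mul_sum, hp.2, hq.2]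

theorem IsProbVec.vecMul {n m : ℕ} {p : Fin n → ℝ} {W : Matrix (Fin n) (Fin m) ℝ}
    (hp : IsProbVec p) (hW : IsStochastic W) : IsProbVec (vecMul p W) := by
  simp only [IsProbVec, Matrix.vecMul, dotProduct]
  refine ⟨fun j => Finset.sum_nonneg fun i _ => mul_nonneg (hp.1 i) (hW.1 i j), ?_⟩
  rw [Finset.sum_comm]
  simp [← Finset.mul_sum, hW.2, hp.2]

theorem vecMul_kron_apply {n m k : ℕ} (p : Fin n → ℝ) (r : Fin m → ℝ)
    (W : Matrix (Fin (n * m)) (Fin k) ℝ) (j : Fin k) :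
    vecMul (kron p r) W j = ∑ i, ∑ t, p i * r t * W (finProdFinEquiv (i, t)) j := by
  simp only [Matrix.vecMul, dotProduct]
  rw [← finProdFinEquiv.sum_comp, Fintype.sum_prod_type]
  simp [kron]

/-- On input `(i, t)`, output `i` if `t = 0`, and otherwise draw from `v` (`t = 1`)
or from `w` (`t = 2`). -/
def mixChannel {n : ℕ} (v w : Fin n → ℝ) : Matrix (Fin (n * 3)) (Fin n) ℝ :=
  Matrix.of fun idx => ![Pi.single (finProdFinEquiv.symm idx).1 1, v, w] (finProdFinEquiv.symm idx).2

theorem isStochastic_mixChannel {n : ℕ} {v w : Fin n → ℝ} (hv : IsProbVec v) (hw : IsProbVec w) :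
    IsStochastic (mixChannel v w) := by
  refine ⟨fun idx j => ?_, fun idx => ?_⟩ <;>
    obtain ⟨⟨i, t⟩, rfl⟩ := finProdFinEquiv.surjective idx <;>
    simp only [mixChannel, Matrix.of_apply, Equiv.symm_apply_apply] <;>
    fin_cases t <;> simp [Pi.single_apply, hv.1, hw.1, hv.2, hw.2]
  split_ifs <;> norm_num

theorem vecMul_kron_mixChannel {n : ℕ} {p : Fin n → ℝ} (hp : ∑ i, p i = 1)
    (r : Fin 3 → ℝ) (v w : Fin n → ℝ) :
    vecMul (kron p r) (mixChannel v w) = fun j => r 0 * p j + r 1 * v j + r 2 * w j := by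
  ext j
  simp only [vecMul_kron_apply, mixChannel, Matrix.of_apply, Equiv.symm_apply_apply,
    Fin.sum_univ_three, Finset.sum_add_distrib]
  simp [Pi.single_apply, ← Finset.sum_mul, hp]
  ring

/-- For the Kullback–Leibler divergence this is `-log₂ t`. -/
noncomputable def pointMassDiv (D : (n : ℕ) → (Fin n → ℝ) → (Fin n → ℝ) → ℝ≥0∞) (t : ℝ) : ℝ≥0∞ :=
  D 2 ![1, 0] ![t, 1 - t]

namespace IsRelativeEntropy

variable {D : (n : ℕ) → (Fin n → ℝ) → (Fin n → ℝ) → ℝ≥0∞}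

theorem dpi_vecMul (hD : IsRelativeEntropy D) {n m : ℕ} {p q : Fin n → ℝ}
    {W : Matrix (Fin n) (Fin m) ℝ} (hp : IsProbVec p) (hq : IsProbVec q) (hW : IsStochastic W) :
    D m (vecMul p W) (vecMul q W) ≤ D n p q :=
  hD.dpi _ _ _ _ hp hq (hp.vecMul hW) (hq.vecMul hW) ⟨W, hW, rfl, rfl⟩

/-- The channel `(1,0) ↦ p`, `(0,1) ↦ (q - l p) / (1 - l)` maps `((1,0), (l, 1-l))` to `(p, q)`. -/
theorem le_pointMassDiv (hD : IsRelativeEntropy D) {n : ℕ} {p q : Fin n → ℝ}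
    (hp : IsProbVec p) (hq : IsProbVec q) {l : ℝ} (hl0 : 0 < l) (hl1 : l < 1)
    (hle : ∀ i, l * p i ≤ q i) : D n p q ≤ pointMassDiv D l := by
  have h1l : 1 - l ≠ 0 := by linarith
  let W : Matrix (Fin 2) (Fin n) ℝ := Matrix.of ![p, fun j => (q j - l * p j) / (1 - l)]
  have hW : IsStochastic W := by
    refine ⟨fun t j => ?_, fun t => ?_⟩ <;> fin_cases t
    · exact hp.1 j
    · exact div_nonneg (by linarith [hle j]) (by linarith)
    · exact hp.2
    · simp [W, ← Finset.sum_div, Finset.sum_sub_distrib, ← Finset.mul_sum, hp.2, hq.2, h1l]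
  unfold pointMassDiv
  convert hD.dpi_vecMul isProbVec_pointMass (isProbVec_pair hl0.le hl1.le) hW using 2 <;>
    ext j <;> simp [W, Matrix.vecMul, dotProduct, Fin.sum_univ_two]
  field_simp
  ring

theorem pointMassDiv_le_of_le (hD : IsRelativeEntropy D) {l t : ℝ} (hl0 : 0 < l) (hl1 : l < 1)
    (hlt : l ≤ t) (ht1 : t ≤ 1) : pointMassDiv D t ≤ pointMassDiv D l := by
  refine hD.le_pointMassDiv isProbVec_pointMass (isProbVec_pair (hl0.le.trans hlt) ht1)
    hl0 hl1 fun i => ?_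
  fin_cases i <;> simp <;> linarith

theorem pointMassDiv_half (hD : IsRelativeEntropy D) : pointMassDiv D (1 / 2) = 1 := by
  have : (![1 / 2, 1 - 1 / 2] : Fin 2 → ℝ) = ![1 / 2, 1 / 2] := by norm_num
  rw [pointMassDiv, this, hD.normalized, Real.logb_self_eq_one one_lt_two, ENNReal.ofReal_one]

theorem two_mul_pointMassDiv_le (hD : IsRelativeEntropy D) {t : ℝ} (h0 : 0 < t) (h1 : t < 1) :
    2 * pointMassDiv D t ≤ pointMassDiv D (t ^ 2) := by
  have ht := isProbVec_pair h0.le h1.le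
  rw [two_mul, pointMassDiv, ← hD.additive _ _ _ _ isProbVec_pointMass ht isProbVec_pointMass ht]
  refine hD.le_pointMassDiv (isProbVec_pointMass.kron isProbVec_pointMass) (ht.kron ht)
    (by positivity) (by nlinarith) fun idx => ?_
  obtain ⟨⟨s, u⟩, rfl⟩ := finProdFinEquiv.surjective idx
  fin_cases s <;> fin_cases u <;> simp [kron] <;> nlinarith

theorem two_pow_mul_pointMassDiv_le (hD : IsRelativeEntropy D) {t : ℝ} (h0 : 0 < t) (h1 : t < 1)
    (m : ℕ) : 2 ^ m * pointMassDiv D t ≤ pointMassDiv D (t ^ 2 ^ m) := by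
  induction m with
  | zero => simp
  | succ m ih =>
    calc 2 ^ (m + 1) * pointMassDiv D t = 2 * (2 ^ m * pointMassDiv D t) := by ring
      _ ≤ 2 * pointMassDiv D (t ^ 2 ^ m) := by gcongr
      _ ≤ pointMassDiv D ((t ^ 2 ^ m) ^ 2) :=
        hD.two_mul_pointMassDiv_le (by positivity) (pow_lt_one₀ h0.le h1 (by positivity))
      _ = pointMassDiv D (t ^ 2 ^ (m + 1)) := by rw [← pow_mul, pow_succ]

theorem pointMassDiv_le_inv_two_pow (hD : IsRelativeEntropy D) {t : ℝ} (h0 : 0 < t) (h1 : t < 1)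
    {m : ℕ} (hm : 1 / 2 ≤ t ^ 2 ^ m) : pointMassDiv D t ≤ 2⁻¹ ^ m := by
  have hpow := hD.two_pow_mul_pointMassDiv_le h0 h1 m
  have hhalf := hD.pointMassDiv_le_of_le (by norm_num) (by norm_num) hm
    (pow_le_one₀ h0.le h1.le)
  rw [hD.pointMassDiv_half] at hhalf
  rw [← ENNReal.inv_pow, ENNReal.le_inv_iff_mul_le, mul_comm]
  exact hpow.trans hhalf

theorem tendsto_pointMassDiv (hD : IsRelativeEntropy D) :
    Tendsto (pointMassDiv D) (𝓝[<] 1) (𝓝 0) := by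
  rw [ENNReal.tendsto_nhds_zero]
  intro ε hε
  obtain ⟨m, hm⟩ := ENNReal.exists_inv_two_pow_lt hε.ne'
  have hpow : ∀ᶠ t in 𝓝[<] (1 : ℝ), 1 / 2 < t ^ 2 ^ m := nhdsWithin_le_nhds <|
    ((continuous_pow _).tendsto' 1 1 (one_pow _)).eventually (lt_mem_nhds (by norm_num))
  filter_upwards [hpow, Ioo_mem_nhdsLT one_pos] with t ht ⟨h0, h1⟩
  exact (hD.pointMassDiv_le_inv_two_pow h0 h1 ht.le).trans hm.le

theorem mixture_le_add (hD : IsRelativeEntropy D) {n : ℕ} {p q v w : Fin n → ℝ}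
    (hp : IsProbVec p) (hq : IsProbVec q) (hv : IsProbVec v) (hw : IsProbVec w)
    {r s : Fin 3 → ℝ} (hr : IsProbVec r) (hs : IsProbVec s) :
    D n (fun j => r 0 * p j + r 1 * v j + r 2 * w j)
      (fun j => s 0 * q j + s 1 * v j + s 2 * w j) ≤ D n p q + D 3 r s := by
  rw [← hD.additive _ _ _ _ hp hq hr hs, ← vecMul_kron_mixChannel hp.2 r v w,
    ← vecMul_kron_mixChannel hq.2 s v w]
  exact hD.dpi_vecMul (hp.kron hr) (hq.kron hs) (isStochastic_mixChannel hv hw)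

theorem le_add_pointMassDiv (hD : IsRelativeEntropy D) {n : ℕ} {p q p' q' : Fin n → ℝ}
    (hp : IsProbVec p) (hq : IsProbVec q) (hp' : IsProbVec p') (hq' : IsProbVec q')
    {t ε : ℝ} (ht0 : 0 < t) (hε0 : 0 < ε) (hεt : ε < 1 - t)
    (hA : ∀ i, (1 - ε) * p i ≤ p' i) (hB : ∀ i, p' i - (1 - ε) * p i ≤ q' i - t * q i) :
    D n p' q' ≤ D n p q + pointMassDiv D t := by
  have hδε : 1 - t - ε ≠ 0 := by linarith
  let v : Fin n → ℝ := fun i => (p' i - (1 - ε) * p i) / ε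
  let w : Fin n → ℝ := fun i => (q' i - t * q i - (p' i - (1 - ε) * p i)) / (1 - t - ε)
  have hv : IsProbVec v := by
    refine ⟨fun i => div_nonneg (by linarith [hA i]) hε0.le, ?_⟩
    simp only [v, ← Finset.sum_div, Finset.sum_sub_distrib, ← Finset.mul_sum, hp.2, hp'.2]
    field_simp
    ring
  have hw : IsProbVec w := by
    refine ⟨fun i => div_nonneg (by linarith [hB i]) (by linarith), ?_⟩
    simp only [w, ← Finset.sum_div, Finset.sum_sub_distrib, ← Finset.mul_sum, hp.2, hp'.2,
      hq.2, hq'.2]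
    field_simp
    ring
  have hr : IsProbVec ![1 - ε, ε, 0] := by
    refine ⟨fun i => ?_, by simp [Fin.sum_univ_three]⟩
    fin_cases i <;> simp <;> linarith
  have hs : IsProbVec ![t, ε, 1 - t - ε] := by
    refine ⟨fun i => ?_, by simp [Fin.sum_univ_three]⟩
    fin_cases i <;> simp <;> linarith
  have hrs : D 3 ![1 - ε, ε, 0] ![t, ε, 1 - t - ε] ≤ pointMassDiv D t :=
    hD.le_pointMassDiv hr hs ht0 (by linarith) fun i => by
      fin_cases i <;> simp <;> nlinarith
  calc D n p' q'
      = D n (fun j => (1 - ε) * p j + ε * v j + 0 * w j)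
          (fun j => t * q j + ε * v j + (1 - t - ε) * w j) := by
        congr 1 <;> ext j <;> simp only [v, w] <;> field_simp <;> ring
    _ ≤ D n p q + D 3 ![1 - ε, ε, 0] ![t, ε, 1 - t - ε] := hD.mixture_le_add hp hq hv hw hr hs
    _ ≤ D n p q + pointMassDiv D t := by gcongr

theorem eventually_le_add_pointMassDiv (hD : IsRelativeEntropy D) {ι : Type*} {l : Filter ι}
    {n : ℕ} {p q : Fin n → ℝ} (hp : ∀ i, 0 ≤ p i) (hq : ∀ i, 0 < q i)
    {a b a' b' : ι → Fin n → ℝ} (ha : ∀ k, IsProbVec (a k)) (hb : ∀ k, IsProbVec (b k))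
    (ha' : ∀ k, IsProbVec (a' k)) (hb' : ∀ k, IsProbVec (b' k))
    (ha_lim : Tendsto a l (𝓝 p)) (hb_lim : Tendsto b l (𝓝 q))
    (ha'_lim : Tendsto a' l (𝓝 p)) (hb'_lim : Tendsto b' l (𝓝 q))
    (hzero : ∀ i, p i = 0 → ∀ᶠ k in l, a k i ≤ a' k i) {t : ℝ} (ht0 : 0 < t) (ht1 : t < 1) :
    ∀ᶠ k in l, D n (a' k) (b' k) ≤ D n (a k) (b k) + pointMassDiv D t := by
  have ht : 0 < 1 - t := by linarith
  obtain ⟨ε, ⟨hεp, hεt⟩, hε0⟩ :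
      ∃ ε, ((∀ i, ε * p i < (1 - t) * q i) ∧ ε < 1 - t) ∧ 0 < ε := by
    refine ((Filter.Eventually.and (eventually_all.2 fun i => ?_) (gt_mem_nhds ht)).filter_mono
      nhdsWithin_le_nhds |>.and self_mem_nhdsWithin).exists (f := 𝓝[>] (0 : ℝ))
    exact ((continuous_mul_const (p i)).tendsto' 0 0 (zero_mul _)).eventually
      (gt_mem_nhds (mul_pos ht (hq i)))
  have hA : ∀ᶠ k in l, ∀ i, (1 - ε) * a k i ≤ a' k i := by
    refine eventually_all.2 fun i => ?_
    rcases (hp i).eq_or_lt with h | h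
    · filter_upwards [hzero i h.symm] with k hk
      nlinarith [(ha k).1 i]
    · refine (((tendsto_pi_nhds.1 ha_lim i).const_mul (1 - ε)).eventually_lt
        (tendsto_pi_nhds.1 ha'_lim i) (by nlinarith)).mono fun k hk => hk.le
  have hB : ∀ᶠ k in l, ∀ i, a' k i - (1 - ε) * a k i ≤ b' k i - t * b k i := by
    refine eventually_all.2 fun i => ?_
    have hlim_a : Tendsto (fun k => a' k i - (1 - ε) * a k i) l (𝓝 (ε * p i)) := by
      convert (tendsto_pi_nhds.1 ha'_lim i).sub
        ((tendsto_pi_nhds.1 ha_lim i).const_mul (1 - ε)) using 2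
      ring
    have hlim_b : Tendsto (fun k => b' k i - t * b k i) l (𝓝 ((1 - t) * q i)) := by
      convert (tendsto_pi_nhds.1 hb'_lim i).sub
        ((tendsto_pi_nhds.1 hb_lim i).const_mul t) using 2
      ring
    exact (hlim_a.eventually_lt hlim_b (hεp i)).mono fun k hk => hk.le
  filter_upwards [hA, hB] with k hAk hBk
  exact hD.le_add_pointMassDiv (ha k) (hb k) (ha' k) (hb' k) ht0 hε0 hεt hAk hBk

end IsRelativeEntropy

section VanishingError

variable {ι κ : Type*} {L : Filter ι} {F : Filter κ} [F.NeBot] {u : ι → ℝ≥0∞} {A : ℝ≥0∞}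
  {g : κ → ℝ≥0∞}

theorem limsup_le_of_eventually_le_add (hg : Tendsto g F (𝓝 0))
    (h : ∀ᶠ x in F, ∀ᶠ k in L, u k ≤ A + g x) : limsup u L ≤ A := by
  have hA : Tendsto (fun x => A + g x) F (𝓝 A) := by simpa using tendsto_const_nhds.add hg
  exact ge_of_tendsto hA (h.mono fun x hx => limsup_le_of_le (by isBoundedDefault) hx)

theorem le_liminf_of_eventually_le_add [L.NeBot] (hg : Tendsto g F (𝓝 0))
    (h : ∀ᶠ x in F, ∀ᶠ k in L, A ≤ u k + g x) : A ≤ liminf u L := by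
  have hA : Tendsto (fun x => liminf u L + g x) F (𝓝 (liminf u L)) := by
    simpa using tendsto_const_nhds.add hg
  refine ge_of_tendsto hA (h.mono fun x hx => ?_)
  rw [← liminf_add_const L u (g x) (by isBoundedDefault) (by isBoundedDefault)]
  exact le_liminf_of_le (by isBoundedDefault) hx

end VanishingError

open Filter Topology in
theorem stmt6_general (D : (n : ℕ) → (Fin n → ℝ) → (Fin n → ℝ) → ℝ≥0∞)
    (hD : IsRelativeEntropy D) (n : ℕ)
    (p q : Fin n → ℝ) (hp : IsProbVec p) (hq : IsProbVec q) (hqpos : ∀ i, 0 < q i)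
    (pk qk : ℕ → Fin n → ℝ)
    (hpk : ∀ k, IsProbVec (pk k))
    (hqk : ∀ k, IsProbVec (qk k))
    (hpc : ∀ i, Tendsto (fun k => pk k i) atTop (𝓝 (p i)))
    (hqc : ∀ i, Tendsto (fun k => qk k i) atTop (𝓝 (q i))) :
    Filter.limsup (fun k => D n (pk k) (qk k)) atTop ≤ D n p q ∧
      ((∀ i, 0 < p i) →
        Tendsto (fun k => D n (pk k) (qk k)) atTop (𝓝 (D n p q))) := by
  have hp_lim : Tendsto pk atTop (𝓝 p) := tendsto_pi_nhds.2 hpc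
  have hq_lim : Tendsto qk atTop (𝓝 q) := tendsto_pi_nhds.2 hqc
  have hIoo : ∀ᶠ t in 𝓝[<] (1 : ℝ), 0 < t ∧ t < 1 := Ioo_mem_nhdsLT one_pos
  have upper : limsup (fun k => D n (pk k) (qk k)) atTop ≤ D n p q :=
    limsup_le_of_eventually_le_add hD.tendsto_pointMassDiv <| hIoo.mono fun t ht =>
      hD.eventually_le_add_pointMassDiv hp.1 hqpos (fun _ => hp) (fun _ => hq) hpk hqk
        tendsto_const_nhds tendsto_const_nhds hp_lim hq_lim
        (fun i h => .of_forall fun k => h ▸ (hpk k).1 i) ht.1 ht.2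
  refine ⟨upper, fun hppos => tendsto_of_le_liminf_of_limsup_le ?_ upper⟩
  exact le_liminf_of_eventually_le_add hD.tendsto_pointMassDiv <| hIoo.mono fun t ht =>
    hD.eventually_le_add_pointMassDiv hp.1 hqpos hpk hqk (fun _ => hp) (fun _ => hq)
      hp_lim hq_lim tendsto_const_nhds tendsto_const_nhds
      (fun i h => absurd h (hppos i).ne') ht.1 ht.2

open Filter Topology in
/-- a relative entropy is upper semi-continuous at `(p,q)` with
`q ∈ P_{>0}(n)` along sequences in `P_{>0}(n) × P_{>0}(n)`, and continuous there
if additionally `p ∈ P_{>0}(n)`. -/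
theorem stmt6 (D : (n : ℕ) → (Fin n → ℝ) → (Fin n → ℝ) → ℝ≥0∞)
    (hD : IsRelativeEntropy D) (n : ℕ)
    (p q : Fin n → ℝ) (hp : IsProbVec p) (hq : IsProbVec q) (hqpos : ∀ i, 0 < q i)
    (pk qk : ℕ → Fin n → ℝ)
    (hpk : ∀ k, IsProbVec (pk k)) (hpkpos : ∀ k i, 0 < pk k i)
    (hqk : ∀ k, IsProbVec (qk k)) (hqkpos : ∀ k i, 0 < qk k i)
    (hpc : ∀ i, Tendsto (fun k => pk k i) atTop (𝓝 (p i)))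
    (hqc : ∀ i, Tendsto (fun k => qk k i) atTop (𝓝 (q i))) :
    Filter.limsup (fun k => D n (pk k) (qk k)) atTop ≤ D n p q ∧
      ((∀ i, 0 < p i) →
        Tendsto (fun k => D n (pk k) (qk k)) atTop (𝓝 (D n p q))) :=
  stmt6_general D hD n p q hp hq hqpos pk qk hpk hqk hpc hqc
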